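/- arXiv:2206.02600 — 2 statements merged into one kernel-verified Lean document; each statement's English description precedes it below -/
import Mathlib

section
/- There exists a constant c > 0 such that for every real x ≥ 1, the series f(x) = Σ_{m=0}^∞ x^m / (Γ(1 + m/2) · m!) satisfies f(x) ≤ exp(c^{1/3} · x^{2/3}). -/
/-!
Since `Γ(1 + y) ≥ ∫_u^∞ s^y e^{-s} ds ≥ u^y e^{-u}` for all `u, y ≥ 0`, taking `u = x^{2/3}` and
`y = m/2` and writing `x^m = u^m · u^{m/2}` gives
`x^m / (Γ(1 + m/2) m!) ≤ e^u u^m / m!`. Summing over `m` bounds the series by `e^u · e^u = e^{2u}`,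
which is the claim with `c = 8`.
-/

open Real MeasureTheory Set

theorem Real.rpow_mul_exp_neg_le_Gamma_add_one {u y : ℝ} (hu : 0 ≤ u) (hy : 0 ≤ y) :
    u ^ y * exp (-u) ≤ Gamma (y + 1) := by
  rw [Gamma_eq_integral (by linarith), add_sub_cancel_right, mul_comm, ← integral_exp_neg_Ioi,
    ← integral_mul_const]
  have hint : IntegrableOn (fun s => exp (-s) * s ^ y) (Ioi 0) := by
    simpa using GammaIntegral_convergent (s := y + 1) (by linarith)
  calc ∫ s in Ioi u, exp (-s) * u ^ y
      ≤ ∫ s in Ioi u, exp (-s) * s ^ y := by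
        refine setIntegral_mono_on ((integrableOn_exp_neg_Ioi u).mul_const _)
          (hint.mono_set (Ioi_subset_Ioi hu)) measurableSet_Ioi fun s hs => ?_
        gcongr
        exact le_of_lt hs
    _ ≤ ∫ s in Ioi 0, exp (-s) * s ^ y := by
        refine setIntegral_mono_set hint ?_ (Ioi_subset_Ioi hu).eventuallyLE
        filter_upwards [ae_restrict_mem measurableSet_Ioi] with s hs
        exact mul_nonneg (exp_pos _).le (rpow_nonneg (le_of_lt hs) _)

lemma pow_div_Gamma_mul_factorial_le {x : ℝ} (hx : 0 ≤ x) (m : ℕ) :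
    x ^ m / (Gamma (1 + (m : ℝ) / 2) * m.factorial) ≤
      exp (x ^ ((2 : ℝ) / 3)) * ((x ^ ((2 : ℝ) / 3)) ^ m / m.factorial) := by
  set u := x ^ ((2 : ℝ) / 3)
  have hu : 0 ≤ u := rpow_nonneg hx _
  have hsplit : x ^ m = u ^ m * u ^ ((m : ℝ) / 2) := by
    rw [show (m : ℝ) / 2 = 1 / 2 * m by ring, rpow_mul_natCast hu, ← mul_pow,
      ← rpow_one_add' hu (by norm_num), ← rpow_mul hx]
    norm_num
  have hGamma : u ^ ((m : ℝ) / 2) ≤ exp u * Gamma (1 + (m : ℝ) / 2) := by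
    have := rpow_mul_exp_neg_le_Gamma_add_one hu (by positivity : (0 : ℝ) ≤ m / 2)
    rw [add_comm, exp_neg, ← div_eq_mul_inv, div_le_iff₀ (exp_pos u)] at this
    linarith
  have hGamma_pos : 0 < Gamma (1 + (m : ℝ) / 2) := Gamma_pos_of_pos (by positivity)
  rw [hsplit, div_le_iff₀ (by positivity)]
  calc u ^ m * u ^ ((m : ℝ) / 2) ≤ u ^ m * (exp u * Gamma (1 + (m : ℝ) / 2)) := by gcongr
    _ = exp u * (u ^ m / m.factorial) * (Gamma (1 + (m : ℝ) / 2) * m.factorial) := by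
        field_simp

lemma tsum_pow_div_Gamma_mul_factorial_le {x : ℝ} (hx : 0 ≤ x) :
    ∑' m : ℕ, x ^ m / (Gamma (1 + (m : ℝ) / 2) * m.factorial) ≤ exp (2 * x ^ ((2 : ℝ) / 3)) := by
  have hexp := (summable_pow_div_factorial (x ^ ((2 : ℝ) / 3))).mul_left (exp (x ^ ((2 : ℝ) / 3)))
  have hnonneg (m : ℕ) : 0 ≤ x ^ m / (Gamma (1 + (m : ℝ) / 2) * m.factorial) :=
    div_nonneg (pow_nonneg hx _) (mul_nonneg (Gamma_pos_of_pos (by positivity)).le (by positivity))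
  calc _ ≤ ∑' m : ℕ, exp (x ^ ((2 : ℝ) / 3)) * ((x ^ ((2 : ℝ) / 3)) ^ m / m.factorial) :=
        Summable.tsum_le_tsum (pow_div_Gamma_mul_factorial_le hx)
          (.of_nonneg_of_le hnonneg (pow_div_Gamma_mul_factorial_le hx) hexp) hexp
    _ = exp (2 * x ^ ((2 : ℝ) / 3)) := by
        have hseries := (NormedSpace.expSeries_div_hasSum_exp (x ^ ((2 : ℝ) / 3))).tsum_eq
        rw [← exp_eq_exp_ℝ] at hseries
        rw [tsum_mul_left, hseries, ← exp_add, two_mul]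

theorem stmt_1 :
    ∃ c : ℝ, 0 < c ∧ ∀ x : ℝ, 1 ≤ x →
      (∑' m : ℕ, x ^ m / (Real.Gamma (1 + (m : ℝ) / 2) * (Nat.factorial m : ℝ)))
        ≤ Real.exp (c ^ ((1 : ℝ) / 3) * x ^ ((2 : ℝ) / 3)) := by
  refine ⟨8, by norm_num, fun x hx => ?_⟩
  have hcube_root : (8 : ℝ) ^ ((1 : ℝ) / 3) = 2 := by
    rw [show (8 : ℝ) = 2 ^ (3 : ℝ) by norm_num, ← rpow_mul (by norm_num)]
    norm_num
  rw [hcube_root]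
  exact tsum_pow_div_Gamma_mul_factorial_le (by linarith)
end

section
/- Let X ⊆ ℝⁿ be a compact set satisfying the ℓ₁-Steiner formula vol_n(X + t·[0,1]ⁿ) = Σ_{m=0}^n V_m'(X) · t^{n−m} for all t > 0 (with V_n'(X) = vol_n(X) and V_0'(X) = 1). Then the number of integer lattice points in X satisfies #(X ∩ ℤⁿ) ≤ Σ_{m=0}^n V_m'(X). -/
open MeasureTheory Pointwise

theorem stmt_10 (n : ℕ) (X : Set (Fin n → ℝ)) (hX : IsCompact X) (V : ℕ → ℝ)
    (hV0 : V 0 = 1) (hVn : V n = (volume X).toReal)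
    (hSteiner : ∀ t : ℝ, 0 < t →
      (volume (X + t • Set.Icc (0 : Fin n → ℝ) 1)).toReal
        = ∑ m ∈ Finset.range (n + 1), V m * t ^ (n - m)) :
    ((X ∩ {x : Fin n → ℝ | ∀ i, ∃ z : ℤ, x i = (z : ℝ)}).ncard : ℝ)
      ≤ ∑ m ∈ Finset.range (n + 1), V m := by
  set L := X ∩ {x : Fin n → ℝ | ∀ i, ∃ z : ℤ, x i = (z : ℝ)} with hLdef
  have hS := hSteiner 1 one_pos
  rw [one_smul] at hS
  simp only [one_pow, mul_one] at hS
  rw [← hS]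
  have hcompact : IsCompact (X + Set.Icc (0 : Fin n → ℝ) 1) := hX.add isCompact_Icc
  have hfin : volume (X + Set.Icc (0 : Fin n → ℝ) 1) ≠ ⊤ := hcompact.measure_lt_top.ne
  by_cases hF : L.Finite
  · -- cubes
    set cube : (Fin n → ℝ) → Set (Fin n → ℝ) :=
      fun x => Set.univ.pi fun i => Set.Ico (x i) (x i + 1) with hcube
    have hvol : ∀ x, volume (cube x) = 1 := by
      intro x
      rw [hcube]
      rw [volume_pi_pi]
      simp [Real.volume_Ico]
    have hdisj : (↑hF.toFinset : Set (Fin n → ℝ)).PairwiseDisjoint cube := by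
      intro x hx y hy hxy
      simp only [Set.Finite.coe_toFinset] at hx hy
      refine Set.disjoint_left.mpr fun a hax hay => ?_
      have hne : ∃ i, x i ≠ y i := by
        by_contra h
        push_neg at h
        exact hxy (funext h)
      obtain ⟨i, hi⟩ := hne
      obtain ⟨zx, hzx⟩ := hx.2 i
      obtain ⟨zy, hzy⟩ := hy.2 i
      have hax' := hax i (Set.mem_univ i)
      have hay' := hay i (Set.mem_univ i)
      simp only [Set.mem_Ico] at hax' hay'
      have hzz : zx ≠ zy := by
        intro h; exact hi (by rw [hzx, hzy, h])
      rcases lt_or_gt_of_ne hzz with h | h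
      · have : (zx : ℝ) + 1 ≤ (zy : ℝ) := by exact_mod_cast Int.add_one_le_of_lt h
        have : x i + 1 ≤ y i := by rw [hzx, hzy]; exact this
        linarith [hax'.2, hay'.1]
      · have : (zy : ℝ) + 1 ≤ (zx : ℝ) := by exact_mod_cast Int.add_one_le_of_lt h
        have : y i + 1 ≤ x i := by rw [hzx, hzy]; exact this
        linarith [hax'.1, hay'.2]
    have hsub : (⋃ x ∈ hF.toFinset, cube x) ⊆ X + Set.Icc (0 : Fin n → ℝ) 1 := by
      intro a ha
      simp only [Set.mem_iUnion] at ha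
      obtain ⟨x, hx, hax⟩ := ha
      rw [Set.Finite.mem_toFinset] at hx
      refine ⟨x, hx.1, a - x, ?_, add_sub_cancel x a⟩
      constructor
      · intro i
        have := hax i (Set.mem_univ i)
        simp only [Set.mem_Ico] at this
        simp only [Pi.sub_apply, Pi.zero_apply]
        linarith [this.1]
      · intro i
        have := hax i (Set.mem_univ i)
        simp only [Set.mem_Ico] at this
        simp only [Pi.sub_apply, Pi.one_apply]
        linarith [this.2]
    have hmeas : volume (⋃ x ∈ hF.toFinset, cube x) = (hF.toFinset.card : ENNReal) := by
      rw [measure_biUnion_finset hdisj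
        (fun x _ => MeasurableSet.univ_pi fun i => measurableSet_Ico)]
      simp [hvol]
    have hle : (hF.toFinset.card : ENNReal) ≤ volume (X + Set.Icc (0 : Fin n → ℝ) 1) := by
      rw [← hmeas]; exact measure_mono hsub
    have h2 := ENNReal.toReal_mono hfin hle
    rw [ENNReal.toReal_natCast] at h2
    rw [Set.ncard_eq_toFinset_card L hF]
    exact h2
  · rw [Set.Infinite.ncard hF]
    simp [ENNReal.toReal_nonneg]
end
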